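/- arXiv:1210.2141 — 4 statements merged into one kernel-verified Lean document; each statement's English description precedes it below -/
import Mathlib

section
/- For every integer n ≥ 1 and every integer l ≥ 0, σ_{n,2l}^{−1/2,−1/2} = 2√π · n! / Γ(n+1/2), and σ_{n,j}^{−1/2,−1/2} = 0 for every odd integer j ≥ 0. -/
noncomputable section

/-- Jacobi polynomial `J_n^{α,β}(x)` (explicit hypergeometric formula). -/
def jacobi (α β : ℝ) (n : ℕ) (x : ℝ) : ℝ :=
  ∑ k ∈ Finset.range (n + 1),
    (Real.Gamma (n + α + 1) / ((n - k).factorial * Real.Gamma (α + k + 1))) *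
      (Real.Gamma (n + β + 1) / (k.factorial * Real.Gamma ((n : ℝ) + β - k + 1))) *
      ((x - 1) / 2) ^ k * ((x + 1) / 2) ^ (n - k)

/-- Jacobi weight `ω^{α,β}(x) = (1-x)^α (1+x)^β`. -/
def jweight (α β x : ℝ) : ℝ := (1 - x) ^ α * (1 + x) ^ β

/-- Normalization factor `γ_n^{α,β}`. -/
def gamJ (α β : ℝ) (n : ℕ) : ℝ :=
  2 ^ (α + β + 1) * Real.Gamma (n + α + 1) * Real.Gamma (n + β + 1) /
    ((2 * n + α + β + 1) * n.factorial * Real.Gamma (n + α + β + 1))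

/-- `γ_0^{α,β} = 2^(α+β+1) Γ(α+1) Γ(β+1) / Γ(α+β+2)`. -/
def gamJ0 (α β : ℝ) : ℝ :=
  2 ^ (α + β + 1) * Real.Gamma (α + 1) * Real.Gamma (β + 1) / Real.Gamma (α + β + 2)

/-- Chebyshev polynomial of the second kind evaluated at a real point. -/
def chebU (m : ℕ) (x : ℝ) : ℝ := (Polynomial.Chebyshev.U ℝ (m : ℤ)).eval x

/-- Chebyshev polynomial of the first kind evaluated at a real point. -/
def chebT (m : ℕ) (x : ℝ) : ℝ := (Polynomial.Chebyshev.T ℝ (m : ℤ)).eval x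

/-- `σ_{n,j}^{α,β}`. -/
def sigmaJ (α β : ℝ) (n j : ℕ) : ℝ :=
  (1 / gamJ α β n) * ∫ x in (-1 : ℝ)..1, chebU (n + j) x * jacobi α β n x * jweight α β x

/-- Closed region bounded by the Bernstein ellipse `E_ρ`. -/
def bernsteinSet (ρ : ℝ) : Set ℂ :=
  {z | ∃ w : ℂ, 1 ≤ ‖w‖ ∧ ‖w‖ ≤ ρ ∧ z = (w + w⁻¹) / 2}

/-- `u ∈ A_ρ` : `u` is analytic on an open set containing the closed Bernstein ellipse region. -/
def InA (ρ : ℝ) (u : ℂ → ℂ) : Prop :=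
  ∃ s : Set ℂ, IsOpen s ∧ bernsteinSet ρ ⊆ s ∧ DifferentiableOn ℂ u s

/-- Parametrization `z(θ)` of the Bernstein ellipse `E_ρ`. -/
def bcurve (ρ θ : ℝ) : ℂ :=
  ((ρ : ℂ) * Complex.exp (θ * Complex.I) + (ρ : ℂ)⁻¹ * Complex.exp (-θ * Complex.I)) / 2

/-- Derivative `z'(θ)` of the Bernstein-ellipse parametrization. -/
def bcurve' (ρ θ : ℝ) : ℂ :=
  ((ρ : ℂ) * Complex.I * Complex.exp (θ * Complex.I)
      - (ρ : ℂ)⁻¹ * Complex.I * Complex.exp (-θ * Complex.I)) / 2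

/-- Jacobi expansion coefficient `û_n^{α,β}` of `u`. -/
def uhatJ (α β : ℝ) (n : ℕ) (u : ℂ → ℂ) : ℂ :=
  (1 / gamJ α β n : ℝ) *
    ∫ x in (-1 : ℝ)..1, u x * (jacobi α β n x : ℂ) * (jweight α β x : ℂ)

end

/-!
For `α = β = -1/2` the Jacobi polynomial is `Γ(n + 1/2) / (√π n!) · T_n`: its coefficients are
that constant times `C(2n, 2k)`, and writing `(x + 1)/2 = u²`, `(x - 1)/2 = v²` over `ℂ`, the sum
`∑ C(2n, 2k) v^(2k) u^(2n-2k)` is the even part of `(u + v)^(2n)`; as `(u ± v)² = x ± s` with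
`s² = x² - 1`, it equals `((x + s)^n + (x - s)^n) / 2 = T_n(x)`.
Since `2 T_n U_{n+j} = U_{2n+j} + U_j`, the integral defining `σ` reduces to integrals of `U_m`
against the Chebyshev weight, which are `π` for even `m` and `0` for odd `m` because
`U_{m+2} - U_m = 2 T_{m+2}` integrates to zero.
-/

open Polynomial Finset

namespace Polynomial.Chebyshev

theorem two_mul_T_mul_U {R : Type*} [CommRing R] (m k : ℤ) :
    2 * T R k * U R m = U R (m + k) + U R (m - k) := by
  induction k using Polynomial.Chebyshev.induct with
  | zero => simp [two_mul]
  | one => rw [T_one, U_add_one, U_sub_one]; ring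
  | add_two k ih1 ih2 =>
    have h₁ := U_add_two R (m + k)
    have h₂ := U_sub_two R (m - k)
    have h₃ := T_add_two R k
    linear_combination (norm := ring_nf) U R m * 2 * h₃ - h₂ - h₁ - ih2 + 2 * (X : R[X]) * ih1
  | neg_add_one k ih1 ih2 =>
    have h₁ := U_add_two R (m + (-k - 1))
    have h₂ := U_sub_two R (m - (-k - 1))
    have h₃ := T_add_two R (-k - 1)
    linear_combination (norm := ring_nf) U R m * 2 * h₃ - h₂ - h₁ - ih2 + 2 * (X : R[X]) * ih1

theorem add_pow_add_sub_pow_eq_two_mul_eval_T {R : Type*} [CommRing R] {x s : R}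
    (hs : s ^ 2 = x ^ 2 - 1) (n : ℕ) :
    (x + s) ^ n + (x - s) ^ n = 2 * (T R n).eval x := by
  induction n using Nat.twoStepInduction with
  | zero => simp only [CharP.cast_eq_zero, T_zero, eval_one, pow_zero]; ring
  | one => simp only [Nat.cast_one, T_one, eval_X, pow_one]; ring
  | more n ih₀ ih₁ =>
    push_cast at ih₁ ⊢
    rw [T_add_two, eval_sub, eval_mul, eval_mul, eval_X, eval_ofNat]
    linear_combination 2 * x * ih₁ - ih₀ + ((x + s) ^ n + (x - s) ^ n) * hs

end Polynomial.Chebyshev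

theorem Finset.sum_range_two_mul_add_one_of_odd {M : Type*} [AddCommMonoid M] {f : ℕ → M}
    (hf : ∀ i, Odd i → f i = 0) (n : ℕ) :
    ∑ i ∈ range (2 * n + 1), f i = ∑ k ∈ range (n + 1), f (2 * k) := by
  induction n with
  | zero => simp
  | succ n ih =>
    rw [show 2 * (n + 1) + 1 = 2 * n + 1 + 1 + 1 by ring, sum_range_succ, sum_range_succ, ih,
      hf _ (odd_two_mul_add_one n), sum_range_succ _ (n + 1), add_zero]
    rfl

theorem add_pow_two_mul_add_sub_pow_two_mul {R : Type*} [CommRing R] (u v : R) (n : ℕ) :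
    (u + v) ^ (2 * n) + (u - v) ^ (2 * n) =
      2 * ∑ k ∈ range (n + 1), ((2 * n).choose (2 * k) : R) * (v ^ 2) ^ k * (u ^ 2) ^ (n - k) := by
  rw [add_comm u, sub_eq_neg_add, add_pow, add_pow, ← sum_add_distrib,
    sum_range_two_mul_add_one_of_odd (fun i hi => by rw [hi.neg_pow]; ring), mul_sum]
  refine sum_congr rfl fun k hk => ?_
  rw [(even_two_mul k).neg_pow, ← Nat.mul_sub, pow_mul, pow_mul]
  ring

theorem sum_choose_two_mul_mul_pow_eq_eval_T (n : ℕ) (x : ℝ) :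
    ∑ k ∈ range (n + 1),
        ((2 * n).choose (2 * k) : ℝ) * ((x - 1) / 2) ^ k * ((x + 1) / 2) ^ (n - k) =
      (Chebyshev.T ℝ n).eval x := by
  obtain ⟨u, hu⟩ := IsAlgClosed.exists_eq_mul_self ((x + 1) / 2 : ℂ)
  obtain ⟨v, hv⟩ := IsAlgClosed.exists_eq_mul_self ((x - 1) / 2 : ℂ)
  have hs : (2 * u * v) ^ 2 = (x : ℂ) ^ 2 - 1 := by
    linear_combination (-(4 : ℂ) * u * u) * hv - (x - 1) * 2 * hu
  have hsum := add_pow_two_mul_add_sub_pow_two_mul u v n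
  rw [pow_mul, pow_mul, show (u + v) ^ 2 = x + 2 * u * v by linear_combination -hu - hv,
    show (u - v) ^ 2 = x - 2 * u * v by linear_combination -hu - hv,
    Chebyshev.add_pow_add_sub_pow_eq_two_mul_eval_T hs, sq, sq, ← hu, ← hv] at hsum
  apply Complex.ofReal_injective
  rw [Chebyshev.complex_ofReal_eval_T]
  push_cast
  linear_combination -hsum / 2

open Real in
theorem Real.Gamma_nat_add_half_eq_factorial (k : ℕ) :
    Gamma (k + 1 / 2) = √π * (2 * k).factorial / (4 ^ k * k.factorial) := by
  induction k with
  | zero => simp [-one_div, Gamma_one_half_eq]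
  | succ k ih =>
    rw [Nat.cast_succ, add_right_comm, Gamma_add_one (by positivity), ih,
      show 2 * (k + 1) = 2 * k + 1 + 1 by ring]
    simp only [Nat.factorial_succ]
    push_cast
    field_simp
    ring

open Real in
theorem Gamma_add_half_div_mul_Gamma_add_half_div {n k : ℕ} (hk : k ≤ n) :
    Gamma (n + 1 / 2) / ((n - k).factorial * Gamma (k + 1 / 2)) *
        (Gamma (n + 1 / 2) / (k.factorial * Gamma ((n - k : ℕ) + 1 / 2))) =
      Gamma (n + 1 / 2) / (√π * n.factorial) * (2 * n).choose (2 * k) := by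
  have hchoose : ((2 * n).choose (2 * k) : ℝ) * (2 * k).factorial * (2 * (n - k)).factorial =
      (2 * n).factorial := by
    rw [Nat.mul_sub]
    exact_mod_cast Nat.choose_mul_factorial_mul_factorial (by omega)
  have hpow : (4 : ℝ) ^ k * 4 ^ (n - k) = 4 ^ n := by rw [← pow_add, Nat.add_sub_cancel' hk]
  rw [Gamma_nat_add_half_eq_factorial n, Gamma_nat_add_half_eq_factorial k,
    Gamma_nat_add_half_eq_factorial (n - k), ← hchoose, ← hpow]
  field_simp

theorem jacobi_neg_half (n : ℕ) (x : ℝ) :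
    jacobi (-(1 / 2)) (-(1 / 2)) n x =
      Real.Gamma (n + 1 / 2) / (√Real.pi * n.factorial) * chebT n x := by
  rw [jacobi, chebT, ← sum_choose_two_mul_mul_pow_eq_eval_T, mul_sum]
  refine sum_congr rfl fun k hk => ?_
  have hk : k ≤ n := Nat.lt_succ_iff.mp (mem_range.mp hk)
  rw [show (n : ℝ) + -(1 / 2) + 1 = n + 1 / 2 by ring,
    show -(1 / 2) + (k : ℝ) + 1 = k + 1 / 2 by ring,
    show (n : ℝ) + -(1 / 2) - k + 1 = (n - k : ℕ) + 1 / 2 by push_cast [hk]; ring,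
    Gamma_add_half_div_mul_Gamma_add_half_div hk]
  ring

open Real MeasureTheory Polynomial.Chebyshev

theorem jweight_neg_half {x : ℝ} (hx : x ∈ Set.Icc (-1 : ℝ) 1) :
    jweight (-(1 / 2)) (-(1 / 2)) x = √(1 - x ^ 2)⁻¹ := by
  rw [jweight, ← mul_rpow (by linarith [hx.2]) (by linarith [hx.1]),
    show (1 - x) * (1 + x) = 1 - x ^ 2 by ring, rpow_neg (by nlinarith [hx.1, hx.2]),
    sqrt_inv, sqrt_eq_rpow, one_div]

theorem integral_mul_jweight_neg_half (f : ℝ → ℝ) :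
    ∫ x in (-1 : ℝ)..1, f x * jweight (-(1 / 2)) (-(1 / 2)) x = ∫ x, f x ∂measureT := by
  rw [integral_measureT]
  refine intervalIntegral.integral_congr fun x hx => ?_
  rw [Set.uIcc_of_le (by norm_num)] at hx
  simp only [jweight_neg_half hx]

theorem integral_eval_U_real_measureT (m : ℕ) :
    ∫ x, (U ℝ m).eval x ∂measureT = if Even m then π else 0 := by
  induction m using Nat.twoStepInduction with
  | zero => simpa using integral_eval_T_real_measureT_zero
  | one =>
    have := integral_eval_T_real_measureT_of_ne_zero (n := 1) one_ne_zero
    simp only [Nat.cast_one, U_one, T_one, eval_mul, eval_ofNat, eval_X] at this ⊢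
    rw [integral_const_mul, this, mul_zero]
    simp
  | more m ih _ =>
    have hT := integral_eval_T_real_measureT_of_ne_zero (n := m + 2) (by omega)
    push_cast
    simp only [U_eq_two_mul_T_add_U, eval_add, eval_mul, eval_ofNat]
    rw [integral_add (integrable_measureT (by fun_prop)) (integrable_measureT (by fun_prop)),
      integral_const_mul, hT, ih]
    simp [Nat.even_add]

theorem integral_eval_U_mul_eval_T_real_measureT (n j : ℕ) :
    ∫ x, (U ℝ (n + j : ℕ)).eval x * (T ℝ n).eval x ∂measureT = if Even j then π else 0 := by
  have hprod (x : ℝ) : (U ℝ (n + j : ℕ)).eval x * (T ℝ n).eval x =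
      ((U ℝ (2 * n + j : ℕ)).eval x + (U ℝ j).eval x) / 2 := by
    have h := congrArg (eval x) (two_mul_T_mul_U (R := ℝ) (n + j : ℕ) n)
    push_cast at h ⊢
    rw [show (n : ℤ) + j + n = 2 * n + j by ring, add_sub_cancel_left] at h
    simp only [eval_mul, eval_add, eval_ofNat] at h
    linarith
  simp_rw [hprod]
  rw [integral_div, integral_add (integrable_measureT (by fun_prop))
    (integrable_measureT (by fun_prop)), integral_eval_U_real_measureT,
    integral_eval_U_real_measureT]
  simp only [Nat.even_add, even_two_mul, true_iff]
  split_ifs <;> ring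

theorem gamJ_neg_half {n : ℕ} (hn : n ≠ 0) :
    gamJ (-(1 / 2)) (-(1 / 2)) n = Gamma (n + 1 / 2) ^ 2 / (2 * n.factorial ^ 2) := by
  have hΓ : (n : ℝ) * Gamma n = n.factorial := by
    rw [← Gamma_add_one (by exact_mod_cast hn), Gamma_nat_eq_factorial]
  rw [gamJ, show (-(1 / 2) : ℝ) + -(1 / 2) + 1 = 0 by ring, rpow_zero,
    show (n : ℝ) + -(1 / 2) + 1 = n + 1 / 2 by ring,
    show 2 * (n : ℝ) + -(1 / 2) + -(1 / 2) + 1 = 2 * n by ring,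
    show (n : ℝ) + -(1 / 2) + -(1 / 2) + 1 = n by ring, ← hΓ]
  ring

theorem sigmaJ_neg_half {n : ℕ} (hn : n ≠ 0) (j : ℕ) :
    sigmaJ (-(1 / 2)) (-(1 / 2)) n j =
      if Even j then 2 * √π * n.factorial / Gamma (n + 1 / 2) else 0 := by
  have hint : ∫ x in (-1 : ℝ)..1, chebU (n + j) x * jacobi (-(1 / 2)) (-(1 / 2)) n x *
      jweight (-(1 / 2)) (-(1 / 2)) x =
      Gamma (n + 1 / 2) / (√π * n.factorial) * (if Even j then π else 0) := calc
    _ = ∫ x in (-1 : ℝ)..1, Gamma (n + 1 / 2) / (√π * n.factorial) *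
          ((U ℝ (n + j : ℕ)).eval x * (T ℝ n).eval x) * jweight (-(1 / 2)) (-(1 / 2)) x :=
      intervalIntegral.integral_congr fun x _ => by rw [jacobi_neg_half, chebU, chebT]; ring
    _ = _ := by
      rw [integral_mul_jweight_neg_half, integral_const_mul,
        integral_eval_U_mul_eval_T_real_measureT]
  have hΓ : 0 < Gamma (n + 1 / 2) := Gamma_pos_of_pos (by positivity)
  rw [sigmaJ, hint, gamJ_neg_half hn]
  split_ifs
  · field_simp
    exact (sq_sqrt pi_pos.le).symm
  · simp

noncomputable section

/-- `σ_{n,2l}^{-1/2,-1/2} = 2√π·n!/Γ(n+1/2)` and `σ_{n,j}^{-1/2,-1/2} = 0`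
for odd `j`. -/
theorem stmt4 (n : ℕ) (hn : 1 ≤ n) :
    (∀ l : ℕ, sigmaJ (-(1/2)) (-(1/2)) n (2 * l) =
        2 * Real.sqrt Real.pi * n.factorial / Real.Gamma (n + 1/2)) ∧
      ∀ j : ℕ, Odd j → sigmaJ (-(1/2)) (-(1/2)) n j = 0 := by
  have hn₀ : n ≠ 0 := Nat.one_le_iff_ne_zero.mp hn
  refine ⟨fun l => ?_, fun j hj => ?_⟩
  · rw [sigmaJ_neg_half hn₀, if_pos (even_two_mul l)]
  · rw [sigmaJ_neg_half hn₀, if_neg (Nat.not_even_iff_odd.mpr hj)]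

end
end

section
/- For every integer n ≥ 0 and every integer l ≥ 0, σ_{n,2l}^{0,0} = ((2n+1)/2) · (Γ(l+1/2)/Γ(l+1)) · (Γ(n+l+1)/Γ(n+l+3/2)), and σ_{n,j}^{0,0} = 0 for every odd integer j ≥ 0. -/
/-!
Write `P_n = J_n^{0,0}` and `s(n, j) = ∫_{-1}^1 U_{n+j} P_n`, so that
`σ_{n,j}^{0,0} = (2n+1)/2 · s(n, j)`. In the variables `u = (x-1)/2`, `v = (x+1)/2` the Legendre
polynomial is `∑ C(n,k)² u^k v^(n-k)`, the homogenization of `F_n(t) = ∑ C(n,k)² t^k`. The identity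
`(n+2) F_{n+2} = (2n+3)(t+1) F_{n+1} - (n+1)(t-1)² F_n`, checked coefficientwise, homogenizes
(with `u + v = x`, `v - u = 1`) to Bonnet's recurrence `(n+2) P_{n+2} = (2n+3) x P_{n+1} - (n+1) P_n`.
Together with `2x U_m = U_{m+1} + U_{m-1}` it yields a three-term recurrence in `n` for `s(n, ·)`
which preserves the parity of `j`, so `s` is determined by `s(0, j) = ∫ U_j = (1 + (-1)^j)/(j+1)`.
The Gamma-function closed form satisfies the same recurrence with the same initial values for
even `j`, and `0` does for odd `j`.
-/

noncomputable section

open Polynomial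

section BinomialSquares

variable {R : Type*} [CommRing R]

theorem Nat.cast_choose_succ_right_eq (n k : ℕ) :
    (n.choose (k + 1) : R) * (k + 1) = n.choose k * (n - k) := by
  rcases le_or_gt k n with hkn | hnk
  · have h := congrArg (Nat.cast : ℕ → R) (Nat.choose_succ_right_eq n k)
    push_cast [Nat.cast_sub hkn] at h
    exact h
  · simp [Nat.choose_eq_zero_of_lt hnk, Nat.choose_eq_zero_of_lt (hnk.trans k.lt_succ_self)]

theorem choose_sq_recurrence (n k : ℕ) :
    ((n : R) + 2) * ((n + 2).choose (k + 2) : R) ^ 2 =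
      (2 * n + 3) * (((n + 1).choose (k + 1) : R) ^ 2 + ((n + 1).choose (k + 2) : R) ^ 2) -
        (n + 1) * ((n.choose k : R) ^ 2 - 2 * (n.choose (k + 1) : R) ^ 2 +
          (n.choose (k + 2) : R) ^ 2) := by
  have h₁ := Nat.cast_choose_succ_right_eq (R := R) n k
  have h₂ := Nat.cast_choose_succ_right_eq (R := R) n (k + 1)
  -- Pascal's rule leaves a quadratic form in `C(n,k)`, `C(n,k+1)`, `C(n,k+2)`,
  -- which vanishes by the two ratio relations `h₁`, `h₂`.
  simp only [Nat.choose_succ_succ', Nat.cast_add] at *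
  push_cast at h₂
  linear_combination -2 * ((n.choose (k + 1) : R) + n.choose (k + 1 + 1)) * h₁ +
    2 * ((n.choose k : R) + n.choose (k + 1)) * h₂

def binomSqPoly (N : ℕ) : R[X] :=
  ∑ k ∈ Finset.range (N + 1), C ((N.choose k : R) ^ 2) * X ^ k

theorem coeff_binomSqPoly (N k : ℕ) : (binomSqPoly N : R[X]).coeff k = (N.choose k : R) ^ 2 := by
  simp only [binomSqPoly, finsetSum_coeff, coeff_C_mul_X_pow, Finset.sum_ite_eq]
  split_ifs with h
  · rfl
  · simp [Nat.choose_eq_zero_of_lt (by simpa using h : N < k)]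

theorem natDegree_binomSqPoly_le (N : ℕ) : (binomSqPoly N : R[X]).natDegree ≤ N :=
  natDegree_sum_le_of_forall_le _ _ fun _ hk =>
    (natDegree_C_mul_X_pow_le _ _).trans (Nat.lt_succ_iff.mp (Finset.mem_range.mp hk))

theorem binomSqPoly_recurrence (n : ℕ) :
    ((n : R) + 2) • (binomSqPoly (n + 2) : R[X]) =
      (2 * n + 3 : R) • ((X + 1) * binomSqPoly (n + 1)) -
        ((n : R) + 1) • ((X - 1) ^ 2 * binomSqPoly n) := by
  ext k
  rw [show (X - 1) ^ 2 * (binomSqPoly n : R[X]) =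
    X ^ 2 * binomSqPoly n - 2 * (X * binomSqPoly n) + binomSqPoly n by ring]
  rcases k with _ | _ | k
  · simp [coeff_binomSqPoly, add_mul]
    ring
  · simp [coeff_binomSqPoly, coeff_X_pow_mul', coeff_X_mul, add_mul]
    ring
  · simp [coeff_binomSqPoly, coeff_X_pow_mul', coeff_X_mul, add_mul]
    linear_combination choose_sq_recurrence (R := R) n k

theorem Polynomial.eval_homogenize_eq_sum (p : R[X]) (N : ℕ) (a b : R) :
    MvPolynomial.eval ![a, b] (p.homogenize N) =
      ∑ k ∈ Finset.range (N + 1), p.coeff k * a ^ k * b ^ (N - k) := by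
  simp [homogenize, MvPolynomial.eval_monomial, Finset.Nat.sum_antidiagonal_eq_sum_range_succ_mk,
    Finsupp.prod_fintype, mul_assoc]

theorem eval_homogenize_binomSqPoly_recurrence (n : ℕ) {u w : R} (h : w - u = 1) :
    ((n : R) + 2) * MvPolynomial.eval ![u, w] ((binomSqPoly (n + 2)).homogenize (n + 2)) =
      (2 * n + 3) * (u + w) * MvPolynomial.eval ![u, w] ((binomSqPoly (n + 1)).homogenize (n + 1)) -
        (n + 1) * MvPolynomial.eval ![u, w] ((binomSqPoly n).homogenize n) := by
  have h₁ := homogenize_mul (X + 1) _ (m := 1) (by compute_degree!)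
    (natDegree_binomSqPoly_le (R := R) (n + 1))
  have h₂ := homogenize_mul ((X - 1) ^ 2) _ (m := 2) (by compute_degree!)
    (natDegree_binomSqPoly_le (R := R) n)
  rw [show 1 + (n + 1) = n + 2 by ring] at h₁
  rw [show 2 + n = n + 2 by ring] at h₂
  have hx : MvPolynomial.eval ![u, w] ((X + 1 : R[X]).homogenize 1) = u + w := by
    simp [add_comm]
  have hsq : MvPolynomial.eval ![u, w] (((X - 1 : R[X]) ^ 2).homogenize 2) = 1 := by
    simp [eval_homogenize_eq_sum, sub_sq, coeff_X]
    linear_combination (w - u + 1) * h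
  have hrec := congrArg (fun p => MvPolynomial.eval ![u, w] (p.homogenize (n + 2)))
    (binomSqPoly_recurrence (R := R) n)
  simp only [homogenize_smul, homogenize_sub, map_sub, MvPolynomial.smul_eval, h₁, h₂, map_mul,
    hx, hsq] at hrec
  linear_combination hrec

end BinomialSquares

theorem jacobi_zero_zero_eq_sum (N : ℕ) (x : ℝ) :
    jacobi 0 0 N x = ∑ k ∈ Finset.range (N + 1),
      (N.choose k : ℝ) ^ 2 * ((x - 1) / 2) ^ k * ((x + 1) / 2) ^ (N - k) := by
  refine Finset.sum_congr rfl fun k hk => ?_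
  have hkN : k ≤ N := Nat.lt_succ_iff.mp (Finset.mem_range.mp hk)
  have hΓ (m : ℕ) : Real.Gamma (m + 1) = m.factorial := Real.Gamma_nat_eq_factorial m
  rw [show (N : ℝ) + 0 - k + 1 = ((N - k : ℕ) : ℝ) + 1 by push_cast [hkN]; ring]
  simp only [add_zero, zero_add, hΓ, Nat.cast_choose ℝ hkN]
  field_simp

theorem jacobi_zero_zero_zero (x : ℝ) : jacobi 0 0 0 x = 1 := by
  simp [jacobi_zero_zero_eq_sum]

theorem jacobi_zero_zero_one (x : ℝ) : jacobi 0 0 1 x = x := by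
  simp [jacobi_zero_zero_eq_sum, Finset.sum_range_succ]
  ring

theorem jacobi_zero_zero_eq_eval_homogenize (N : ℕ) (x : ℝ) :
    jacobi 0 0 N x =
      MvPolynomial.eval ![(x - 1) / 2, (x + 1) / 2] ((binomSqPoly N).homogenize N) := by
  simp [jacobi_zero_zero_eq_sum, eval_homogenize_eq_sum, coeff_binomSqPoly]

theorem jacobi_zero_zero_recurrence (n : ℕ) (x : ℝ) :
    ((n : ℝ) + 2) * jacobi 0 0 (n + 2) x =
      (2 * n + 3) * x * jacobi 0 0 (n + 1) x - (n + 1) * jacobi 0 0 n x := by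
  simp only [jacobi_zero_zero_eq_eval_homogenize]
  convert eval_homogenize_binomSqPoly_recurrence n (u := (x - 1) / 2) (w := (x + 1) / 2)
    (by ring) using 3
  ring

@[fun_prop]
theorem continuous_jacobi (α β : ℝ) (n : ℕ) : Continuous (jacobi α β n) := by
  unfold jacobi
  fun_prop

section Chebyshev

open Polynomial.Chebyshev

theorem chebU_add_two (m : ℕ) (x : ℝ) : chebU (m + 2) x = 2 * x * chebU (m + 1) x - chebU m x := by
  simp [chebU, U_add_two]

@[fun_prop]
theorem continuous_chebU (m : ℕ) : Continuous (chebU m) := (U ℝ m).continuous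

theorem integral_chebU (m : ℕ) : ∫ x in (-1 : ℝ)..1, chebU m x = (1 + (-1) ^ m) / (m + 1) := by
  have hT (x : ℝ) : HasDerivAt (fun y => (T ℝ (m + 1 : ℤ)).eval y) ((m + 1) * chebU m x) x := by
    simpa [T_derivative_eq_U, chebU] using (T ℝ (m + 1 : ℤ)).hasDerivAt x
  have hint := intervalIntegral.integral_eq_sub_of_hasDerivAt (fun x _ => hT x)
    ((continuous_const.mul (continuous_chebU m)).intervalIntegrable (-1) 1)
  rw [intervalIntegral.integral_const_mul, T_eval_one, T_eval_neg_one] at hint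
  rw [eq_div_iff (by positivity), mul_comm, hint, Int.negOnePow_succ, Units.val_neg, Int.cast_neg,
    Int.cast_negOnePow_natCast]
  ring

theorem integral_chebU_succ_mul_id_mul {f : ℝ → ℝ} (hf : Continuous f) (m : ℕ) :
    ∫ x in (-1 : ℝ)..1, chebU (m + 1) x * (x * f x) =
      ((∫ x in (-1 : ℝ)..1, chebU (m + 2) x * f x) + ∫ x in (-1 : ℝ)..1, chebU m x * f x) / 2 := by
  have hi (k : ℕ) : IntervalIntegrable (fun x => chebU k x * f x) MeasureTheory.volume (-1) 1 :=
    (by fun_prop : Continuous _).intervalIntegrable _ _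
  rw [← intervalIntegral.integral_add (hi _) (hi _), ← intervalIntegral.integral_div]
  refine intervalIntegral.integral_congr fun x _ => ?_
  simp only [chebU_add_two]
  ring

end Chebyshev

def legendreChebUMoment (n j : ℕ) : ℝ :=
  ∫ x in (-1 : ℝ)..1, chebU (n + j) x * jacobi 0 0 n x

/-- The first clause is the case `n = -1` of the second. -/
def SatisfiesMomentRecurrence (f : ℕ → ℕ → ℝ) : Prop :=
  (∀ l : ℕ, f 1 l = (f 0 (l + 1) + f 0 l) / 2) ∧
    ∀ n l : ℕ, ((n : ℝ) + 2) * f (n + 2) l =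
      (2 * n + 3) / 2 * (f (n + 1) (l + 1) + f (n + 1) l) - (n + 1) * f n (l + 1)

theorem SatisfiesMomentRecurrence.ext {f g : ℕ → ℕ → ℝ} (hf : SatisfiesMomentRecurrence f)
    (hg : SatisfiesMomentRecurrence g) (h₀ : f 0 = g 0) : f = g := by
  suffices h : ∀ n, f n = g n ∧ f (n + 1) = g (n + 1) from funext fun n => (h n).1
  intro n
  induction n with
  | zero => exact ⟨h₀, funext fun l => by rw [hf.1, hg.1, h₀]⟩
  | succ n ih =>
    refine ⟨ih.2, funext fun l => mul_left_cancel₀ (by positivity : (n : ℝ) + 2 ≠ 0) ?_⟩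
    rw [hf.2, hg.2, ih.1, ih.2]

theorem legendreChebUMoment_zero (j : ℕ) :
    legendreChebUMoment 0 j = (1 + (-1) ^ j) / (j + 1) := by
  simp [legendreChebUMoment, jacobi_zero_zero_zero, integral_chebU]

theorem legendreChebUMoment_one (j : ℕ) :
    legendreChebUMoment 1 j = (legendreChebUMoment 0 (j + 2) + legendreChebUMoment 0 j) / 2 := by
  have h := integral_chebU_succ_mul_id_mul (continuous_jacobi 0 0 0) j
  simpa [legendreChebUMoment, jacobi_zero_zero_zero, jacobi_zero_zero_one, add_comm 1 j] using h

theorem legendreChebUMoment_recurrence (n j : ℕ) :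
    ((n : ℝ) + 2) * legendreChebUMoment (n + 2) j =
      (2 * n + 3) / 2 * (legendreChebUMoment (n + 1) (j + 2) + legendreChebUMoment (n + 1) j) -
        (n + 1) * legendreChebUMoment n (j + 2) := by
  have hx := integral_chebU_succ_mul_id_mul (continuous_jacobi 0 0 (n + 1)) (n + 1 + j)
  rw [show n + 1 + j + 2 = n + 1 + (j + 2) by ring] at hx
  have hpt (x : ℝ) : ((n : ℝ) + 2) * (chebU (n + 2 + j) x * jacobi 0 0 (n + 2) x) =
      (2 * n + 3) * (chebU (n + 1 + j + 1) x * (x * jacobi 0 0 (n + 1) x)) -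
        (n + 1) * (chebU (n + (j + 2)) x * jacobi 0 0 n x) := by
    rw [show n + 1 + j + 1 = n + 2 + j by ring, show n + (j + 2) = n + 2 + j by ring]
    linear_combination chebU (n + 2 + j) x * jacobi_zero_zero_recurrence n x
  unfold legendreChebUMoment
  rw [← intervalIntegral.integral_const_mul, intervalIntegral.integral_congr fun x _ => hpt x,
    intervalIntegral.integral_sub, intervalIntegral.integral_const_mul,
    intervalIntegral.integral_const_mul, hx]
  · ring
  all_goals exact (Continuous.intervalIntegrable (by fun_prop) _ _)

theorem satisfiesMomentRecurrence_legendreChebUMoment (c : ℕ) :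
    SatisfiesMomentRecurrence fun n l => legendreChebUMoment n (2 * l + c) := by
  refine ⟨fun l => ?_, fun n l => ?_⟩
  · simpa only [show 2 * (l + 1) + c = 2 * l + c + 2 by ring] using
      legendreChebUMoment_one (2 * l + c)
  · simpa only [show 2 * (l + 1) + c = 2 * l + c + 2 by ring] using
      legendreChebUMoment_recurrence n (2 * l + c)

def gammaHalfRatio (s : ℝ) : ℝ := Real.Gamma s / Real.Gamma (s + 1 / 2)

theorem gammaHalfRatio_add_one {s : ℝ} (hs : 0 < s) :
    gammaHalfRatio (s + 1) = gammaHalfRatio s * (s / (s + 1 / 2)) := by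
  have hΓ : Real.Gamma (s + 1 / 2) ≠ 0 := (Real.Gamma_pos_of_pos (by positivity)).ne'
  rw [gammaHalfRatio, gammaHalfRatio, Real.Gamma_add_one hs.ne',
    show s + 1 + 1 / 2 = s + 1 / 2 + 1 by ring, Real.Gamma_add_one (by positivity)]
  field_simp

def gammaMoment (n l : ℕ) : ℝ := gammaHalfRatio (l + 1 / 2) * gammaHalfRatio (n + l + 1)

theorem gammaMoment_zero (l : ℕ) : gammaMoment 0 l = 2 / (2 * l + 1) := by
  have hΓ : Real.Gamma (l + 1 / 2) ≠ 0 := (Real.Gamma_pos_of_pos (by positivity)).ne'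
  rw [gammaMoment, gammaHalfRatio, gammaHalfRatio, Nat.cast_zero, zero_add,
    show (l : ℝ) + 1 / 2 + 1 / 2 = l + 1 by ring, show (l : ℝ) + 1 + 1 / 2 = l + 1 / 2 + 1 by ring,
    Real.Gamma_add_one (s := (l : ℝ) + 1 / 2) (by positivity)]
  field_simp

theorem gammaMoment_succ_left (n l : ℕ) :
    gammaMoment (n + 1) l = gammaMoment n l * ((n + l + 1) / (n + l + 1 + 1 / 2)) := by
  rw [gammaMoment, gammaMoment, Nat.cast_succ, show (n : ℝ) + 1 + l + 1 = n + l + 1 + 1 by ring,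
    gammaHalfRatio_add_one (by positivity), mul_assoc]

theorem gammaMoment_succ_right (n l : ℕ) :
    gammaMoment n (l + 1) = gammaMoment n l * ((l + 1 / 2) / (l + 1 / 2 + 1 / 2)) *
      ((n + l + 1) / (n + l + 1 + 1 / 2)) := by
  rw [gammaMoment, gammaMoment, Nat.cast_succ, show (l : ℝ) + 1 + 1 / 2 = l + 1 / 2 + 1 by ring,
    show (n : ℝ) + (l + 1) + 1 = n + l + 1 + 1 by ring, gammaHalfRatio_add_one (by positivity),
    gammaHalfRatio_add_one (by positivity)]
  ring

theorem satisfiesMomentRecurrence_gammaMoment : SatisfiesMomentRecurrence gammaMoment := by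
  refine ⟨fun l => ?_, fun n l => ?_⟩ <;>
  · simp only [gammaMoment_succ_left, gammaMoment_succ_right]
    push_cast
    field_simp
    ring

theorem legendreChebUMoment_two_mul (n l : ℕ) :
    legendreChebUMoment n (2 * l) = gammaMoment n l := by
  have h := (satisfiesMomentRecurrence_legendreChebUMoment 0).ext
    satisfiesMomentRecurrence_gammaMoment (funext fun l => ?_)
  · simpa using congrFun (congrFun h n) l
  · norm_num [legendreChebUMoment_zero, gammaMoment_zero, pow_mul]

theorem legendreChebUMoment_two_mul_add_one (n l : ℕ) :
    legendreChebUMoment n (2 * l + 1) = 0 := by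
  have h := (satisfiesMomentRecurrence_legendreChebUMoment 1).ext (g := fun _ _ => 0)
    ⟨fun _ => by simp, fun _ _ => by simp⟩ (funext fun l => ?_)
  · exact congrFun (congrFun h n) l
  · simp [legendreChebUMoment_zero, pow_succ, pow_mul]

theorem sigmaJ_zero_zero (n j : ℕ) :
    sigmaJ 0 0 n j = (2 * n + 1) / 2 * legendreChebUMoment n j := by
  have hγ : gamJ 0 0 n = 2 / (2 * n + 1) := by
    simp [gamJ, Real.Gamma_nat_eq_factorial]
    field_simp
  simp [sigmaJ, hγ, jweight, legendreChebUMoment]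

/-- `σ_{n,2l}^{0,0} = ((2n+1)/2)·(Γ(l+1/2)/Γ(l+1))·(Γ(n+l+1)/Γ(n+l+3/2))`
and `σ_{n,j}^{0,0} = 0` for odd `j`. -/
theorem stmt5 (n : ℕ) :
    (∀ l : ℕ, sigmaJ 0 0 n (2 * l) =
        (2 * n + 1) / 2 * (Real.Gamma (l + 1/2) / Real.Gamma (l + 1)) *
          (Real.Gamma ((n : ℝ) + l + 1) / Real.Gamma ((n : ℝ) + l + 3/2))) ∧
      ∀ j : ℕ, Odd j → sigmaJ 0 0 n j = 0 := by
  refine ⟨fun l => ?_, fun j ⟨l, hl⟩ => ?_⟩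
  · rw [sigmaJ_zero_zero, legendreChebUMoment_two_mul, gammaMoment, gammaHalfRatio, gammaHalfRatio,
      show (l : ℝ) + 1 / 2 + 1 / 2 = l + 1 by ring, show (n : ℝ) + l + 1 + 1 / 2 = n + l + 3 / 2 by ring]
    ring
  · rw [hl, sigmaJ_zero_zero, legendreChebUMoment_two_mul_add_one, mul_zero]

end
end

section
/- Let α, β > −1 and let n ≥ 0 be an integer with n + α + β + 1 > 0 (automatic for n ≥ 1). Then for every integer j ≥ 0, σ_{n,j}^{α,β} = [√π (2n+α+β+1) Γ(n+α+β+1) / (2 Γ(n+α+1))] · Σ_{m=0}^{j} (−1)^m Γ(2n+j+m+2) Γ(n+m+α+1) / ( m! (j−m)! Γ(n+m+3/2) Γ(2n+m+α+β+2) ). -/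
/-!
Write `U_N(x) = Σ_m (-2)^m C(N+m+1, 2m+1) (1-x)^m` with `N = n + j`, so that `σ` is a combination
of the moments `∫ (1-x)^m J_n ω`. Expanding `J_n` as well, each moment is a finite sum of Beta
integrals, and the sum over `k` is the alternating sum `Σ_k (-1)^k C(n,k) (α+1+k)_m`, i.e. an
`n`-th forward difference of a Pochhammer symbol, equal to
`(-1)^n m(m-1)⋯(m-n+1) (α+n+1)_{m-n}`.
The moments with `m < n` therefore vanish, and in the remaining terms `m = n + i` Legendre's
duplication formula turns `(2m+1)!` into `Γ(m+1) Γ(m+3/2)`.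
-/

open Finset Polynomial Real MeasureTheory intervalIntegral fwdDiff

theorem Nat.choose_add_three_add_choose_add_one (a b : ℕ) :
    (a + 3).choose (b + 2) + (a + 1).choose (b + 2) =
      2 * (a + 2).choose (b + 2) + (a + 1).choose b := by
  have h₁ : (a + 3).choose (b + 2) = (a + 2).choose (b + 1) + (a + 2).choose (b + 2) :=
    Nat.choose_succ_succ _ _
  have h₂ : (a + 2).choose (b + 2) = (a + 1).choose (b + 1) + (a + 1).choose (b + 2) :=
    Nat.choose_succ_succ _ _
  have h₃ : (a + 2).choose (b + 1) = (a + 1).choose b + (a + 1).choose (b + 1) :=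
    Nat.choose_succ_succ _ _
  omega

namespace Polynomial.Chebyshev

variable (R : Type*) [CommRing R]

/- The terms with `m > N` vanish; allowing any range `K > N` lets the three sums in the
recurrence `U (N+2) = 2 X U (N+1) - U N` be compared over a common range. -/
theorem U_eq_sum_one_sub_X_pow_of_lt (N K : ℕ) (hK : N < K) :
    U R N = ∑ m ∈ range K, (-2) ^ m * ((N + m + 1).choose (2 * m + 1) : R[X]) * (1 - X) ^ m := by
  induction N using Nat.twoStepInduction generalizing K with
  | zero =>
    obtain ⟨K, rfl⟩ : ∃ K', K = K' + 1 := ⟨K - 1, by omega⟩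
    rw [sum_range_succ', sum_eq_zero fun m _ => by rw [Nat.choose_eq_zero_of_lt (by omega)]; simp]
    simp
  | one =>
    obtain ⟨K, rfl⟩ : ∃ K', K = K' + 2 := ⟨K - 2, by omega⟩
    rw [sum_range_succ', sum_range_succ',
      sum_eq_zero fun m _ => by rw [Nat.choose_eq_zero_of_lt (by omega)]; simp]
    norm_num
    ring
  | more N ih₀ ih₁ =>
    obtain ⟨K, rfl⟩ : ∃ K', K = K' + 1 := ⟨K - 1, by omega⟩
    have hrec (m : ℕ) :
        (-2) ^ (m + 1) * ((N + 2 + (m + 1) + 1).choose (2 * (m + 1) + 1) : R[X]) *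
          (1 - X) ^ (m + 1) =
        2 * ((-2) ^ (m + 1) * ((N + 1 + (m + 1) + 1).choose (2 * (m + 1) + 1) : R[X]) *
          (1 - X) ^ (m + 1)) -
        2 * (1 - X) * ((-2) ^ m * ((N + 1 + m + 1).choose (2 * m + 1) : R[X]) * (1 - X) ^ m) -
        (-2) ^ (m + 1) * ((N + (m + 1) + 1).choose (2 * (m + 1) + 1) : R[X]) *
          (1 - X) ^ (m + 1) := by
      have hpascal := congrArg (Nat.cast (R := R[X]))
        (Nat.choose_add_three_add_choose_add_one (N + m + 1) (2 * m + 1))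
      push_cast at hpascal
      ring_nf at hpascal ⊢
      linear_combination (-2) ^ m * (1 - X) ^ m * (-2) * (1 - X) * hpascal
    calc U R ↑(N + 2) = 2 * U R ↑(N + 1) - 2 * (1 - X) * U R ↑(N + 1) - U R N := by
          push_cast; rw [U_add_two]; ring
      _ = _ := by
        nth_rw 1 [ih₁ (K + 1) (by omega)]
        rw [ih₁ K (by omega), ih₀ (K + 1) (by omega), sum_range_succ' _ K, sum_range_succ' _ K,
          sum_range_succ' _ K, sum_congr rfl fun m _ => hrec m, sum_sub_distrib, sum_sub_distrib,
          ← mul_sum, ← mul_sum]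
        simp only [add_zero, mul_zero, zero_add, pow_zero, one_mul, mul_one, Nat.choose_one_right]
        push_cast
        ring

end Polynomial.Chebyshev

theorem chebU_eq_sum (N : ℕ) (x : ℝ) :
    chebU N x =
      ∑ m ∈ range (N + 1), (-2) ^ m * ((N + m + 1).choose (2 * m + 1) : ℝ) * (1 - x) ^ m := by
  simp [chebU, Chebyshev.U_eq_sum_one_sub_X_pow_of_lt ℝ N (N + 1) N.lt_succ_self, eval_finsetSum]

theorem intervalIntegrable_one_sub_rpow_mul_one_add_rpow {p q : ℝ} (hp : -1 < p) (hq : -1 < q) :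
    IntervalIntegrable (fun t => (1 - t) ^ p * (1 + t) ^ q) volume (-1) 1 := by
  refine IntervalIntegrable.trans (b := 0) ?_ ?_
  · have hq' : IntervalIntegrable (fun t : ℝ => (1 + t) ^ q) volume (-1) 0 := by
      simpa using (intervalIntegral.intervalIntegrable_rpow' (a := 0) (b := 1) hq).comp_add_left 1
    refine hq'.continuousOn_mul (ContinuousOn.rpow_const (by fun_prop) fun t ht => Or.inl ?_)
    rw [Set.uIcc_of_le (by norm_num)] at ht
    linarith [ht.2]
  · have hp' : IntervalIntegrable (fun t : ℝ => (1 - t) ^ p) volume 0 1 := by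
      simpa using
        ((intervalIntegral.intervalIntegrable_rpow' (a := 0) (b := 1) hp).comp_sub_left 1).symm
    refine hp'.mul_continuousOn (ContinuousOn.rpow_const (by fun_prop) fun t ht => Or.inl ?_)
    rw [Set.uIcc_of_le (by norm_num)] at ht
    linarith [ht.1]

theorem integral_rpow_mul_one_sub_rpow {p q : ℝ} (hp : -1 < p) (hq : -1 < q) :
    ∫ x in (0 : ℝ)..1, x ^ p * (1 - x) ^ q =
      Gamma (p + 1) * Gamma (q + 1) / Gamma (p + q + 2) := by
  have hbeta : Complex.betaIntegral (p + 1 : ℝ) (q + 1 : ℝ) =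
      ((∫ x in (0 : ℝ)..1, x ^ p * (1 - x) ^ q : ℝ) : ℂ) := by
    rw [Complex.betaIntegral, ← intervalIntegral.integral_ofReal]
    refine integral_congr fun x hx => ?_
    rw [Set.uIcc_of_le zero_le_one] at hx
    simp only [Complex.ofReal_mul, Complex.ofReal_cpow hx.1,
      Complex.ofReal_cpow (sub_nonneg.2 hx.2), Complex.ofReal_sub, Complex.ofReal_one,
      Complex.ofReal_add, add_sub_cancel_right]
  have hG := Complex.Gamma_mul_Gamma_eq_betaIntegral (s := (p + 1 : ℝ)) (t := (q + 1 : ℝ))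
    (by simp only [Complex.ofReal_re]; linarith) (by simp only [Complex.ofReal_re]; linarith)
  rw [hbeta, ← Complex.ofReal_add, Complex.Gamma_ofReal, Complex.Gamma_ofReal,
    Complex.Gamma_ofReal, ← Complex.ofReal_mul, ← Complex.ofReal_mul, Complex.ofReal_inj,
    show p + 1 + (q + 1) = p + q + 2 by ring] at hG
  rw [hG, mul_div_cancel_left₀ _ (Gamma_pos_of_pos (by linarith)).ne']

theorem integral_one_sub_rpow_mul_one_add_rpow {p q : ℝ} (hp : -1 < p) (hq : -1 < q) :
    ∫ t in (-1 : ℝ)..1, (1 - t) ^ p * (1 + t) ^ q =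
      2 ^ (p + q + 1) * Gamma (p + 1) * Gamma (q + 1) / Gamma (p + q + 2) := by
  have hsub := intervalIntegral.integral_comp_mul_add (a := 0) (b := 1)
    (fun t : ℝ => (1 - t) ^ p * (1 + t) ^ q) two_ne_zero (-1)
  norm_num at hsub
  have hpull : ∫ x in (0 : ℝ)..1, (1 - (2 * x + -1)) ^ p * (2 * x) ^ q =
      2 ^ (p + q) * ∫ x in (0 : ℝ)..1, x ^ q * (1 - x) ^ p := by
    rw [← intervalIntegral.integral_const_mul]
    refine integral_congr fun x hx => ?_
    rw [Set.uIcc_of_le zero_le_one] at hx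
    rw [show 1 - (2 * x + -1) = 2 * (1 - x) by ring, mul_rpow zero_le_two (by linarith [hx.2]),
      mul_rpow zero_le_two hx.1, rpow_add two_pos]
    ring
  rw [hpull, integral_rpow_mul_one_sub_rpow hq hp, add_comm q p] at hsub
  rw [rpow_add_one two_ne_zero]
  linear_combination -2 * hsub

theorem Real.rpow_add_natCast_of_neg_one_lt {x y : ℝ} (hx : 0 ≤ x) (hy : -1 < y) (n : ℕ) :
    x ^ (y + n) = x ^ y * x ^ n := by
  rcases n with _ | n
  · simp
  · exact rpow_add_natCast' hx (by push_cast; linarith [(n.cast_nonneg : (0 : ℝ) ≤ n)])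

theorem Real.Gamma_add_nat_eq_ascPochhammer_eval_mul {a : ℝ} (ha : 0 < a) (m : ℕ) :
    Gamma (a + m) = (ascPochhammer ℝ m).eval a * Gamma a := by
  induction m with
  | zero => simp
  | succ m ih =>
    rw [Nat.cast_succ, ← add_assoc, Gamma_add_one (by positivity), ih, ascPochhammer_succ_eval]
    ring

theorem Real.Gamma_nat_add_three_halves (k : ℕ) :
    Gamma (k + 3 / 2) = (2 * k + 1).factorial * √π / (2 ^ (2 * k + 1) * k.factorial) := by
  have h := Gamma_mul_Gamma_add_half (k + 1)
  rw [show (k : ℝ) + 1 + 1 / 2 = k + 3 / 2 by ring, Gamma_nat_eq_factorial,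
    show 2 * ((k : ℝ) + 1) = (2 * k + 1 : ℕ) + 1 by push_cast; ring, Gamma_nat_eq_factorial,
    show 1 - ((2 * k + 1 : ℕ) + 1 : ℝ) = -(2 * k + 1 : ℕ) by ring, rpow_neg zero_le_two,
    rpow_natCast] at h
  rw [eq_div_iff (by positivity)]
  calc Gamma (k + 3 / 2) * (2 ^ (2 * k + 1) * k.factorial)
      = 2 ^ (2 * k + 1) * (k.factorial * Gamma (k + 3 / 2)) := by ring
    _ = (2 * k + 1).factorial * √π := by rw [h]; field_simp

section Pochhammer

variable {R : Type*} [CommRing R]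

theorem fwdDiff_ascPochhammer_eval (m : ℕ) :
    Δ_[1] (fun a : R => (ascPochhammer R (m + 1)).eval a) =
      fun a => (m + 1) * (ascPochhammer R m).eval (a + 1) := by
  ext a
  rw [fwdDiff, ascPochhammer_succ_eval, ascPochhammer_succ_left, eval_mul, eval_X, eval_comp,
    eval_add, eval_X, eval_one]
  ring

theorem fwdDiff_iter_ascPochhammer_eval (m n : ℕ) (a : R) :
    (Δ_[1])^[n] (fun a : R => (ascPochhammer R m).eval a) a =
      m.descFactorial n * (ascPochhammer R (m - n)).eval (a + n) := by
  induction n generalizing m a with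
  | zero => simp
  | succ n ih =>
    rw [Function.iterate_succ_apply]
    cases m with
    | zero =>
      have hconst : Δ_[1] (fun _ : R => (0 : R)) = fun _ => 0 := fwdDiff_const 1 0
      simp [ascPochhammer_zero, Function.iterate_fixed hconst]
    | succ m =>
      have hsmul : (fun a : R => (m + 1) * (ascPochhammer R m).eval (a + 1)) =
          ((m : R) + 1) • fun a => (ascPochhammer R m).eval (a + 1) := rfl
      rw [fwdDiff_ascPochhammer_eval, hsmul, fwdDiff_iter_const_smul, Pi.smul_apply, smul_eq_mul,
        fwdDiff_iter_comp_add (1 : R) (fun a => (ascPochhammer R m).eval a), ih,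
        Nat.succ_descFactorial_succ, Nat.add_sub_add_right, add_right_comm a 1, Nat.cast_succ,
        ← add_assoc]
      push_cast
      ring

theorem sum_neg_one_pow_mul_choose_mul_ascPochhammer_eval (n m : ℕ) (a : R) :
    ∑ k ∈ range (n + 1), (-1) ^ k * (n.choose k : R) * (ascPochhammer R m).eval (a + k) =
      (-1) ^ n * m.descFactorial n * (ascPochhammer R (m - n)).eval (a + n) := by
  rw [mul_assoc, ← fwdDiff_iter_ascPochhammer_eval, fwdDiff_iter_eq_sum_shift, mul_sum]
  refine sum_congr rfl fun k hk => ?_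
  have hsign : (-1 : R) ^ n * (-1) ^ (n - k) = (-1) ^ k := by
    rw [← pow_add, show n + (n - k) = k + 2 * (n - k) by grind, pow_add, pow_mul]
    simp
  rw [zsmul_eq_mul, nsmul_one]
  push_cast
  linear_combination -((n.choose k : R) * (ascPochhammer R m).eval (a + k)) * hsign

end Pochhammer

theorem jacobi_mul_jweight_eq_sum {α β : ℝ} (hα : -1 < α) (hβ : -1 < β) (n m : ℕ) {x : ℝ}
    (hx : x ∈ Set.Icc (-1 : ℝ) 1) :
    (1 - x) ^ m * jacobi α β n x * jweight α β x =
      ∑ k ∈ range (n + 1), (-1) ^ k / 2 ^ n *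
        (Gamma (n + α + 1) / ((n - k).factorial * Gamma (α + k + 1))) *
        (Gamma (n + β + 1) / (k.factorial * Gamma ((n : ℝ) + β - k + 1))) *
        ((1 - x) ^ (α + (m + k : ℕ)) * (1 + x) ^ (β + (n - k : ℕ))) := by
  rw [jacobi, jweight, mul_sum, sum_mul]
  refine sum_congr rfl fun k hk => ?_
  rw [rpow_add_natCast_of_neg_one_lt (by linarith [hx.2]) hα,
    rpow_add_natCast_of_neg_one_lt (by linarith [hx.1]) hβ,
    show (x - 1) / 2 = -((1 - x) / 2) by ring, neg_pow, div_pow, div_pow,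
    show x + 1 = 1 + x by ring, ← pow_sub_mul_pow (2 : ℝ) (mem_range_succ_iff.1 hk), pow_add]
  ring

theorem jacobi_coeff_mul_beta_eq {α β : ℝ} (hα : -1 < α) (hβ : -1 < β) {n k : ℕ} (hkn : k ≤ n)
    (m : ℕ) :
    (-1) ^ k / 2 ^ n * (Gamma (n + α + 1) / ((n - k).factorial * Gamma (α + k + 1))) *
        (Gamma (n + β + 1) / (k.factorial * Gamma ((n : ℝ) + β - k + 1))) *
        (2 ^ (α + (m + k : ℕ) + (β + (n - k : ℕ)) + 1) * Gamma (α + (m + k : ℕ) + 1) *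
          Gamma (β + (n - k : ℕ) + 1) / Gamma (α + (m + k : ℕ) + (β + (n - k : ℕ)) + 2)) =
      2 ^ (α + β + m + 1) * Gamma (n + α + 1) * Gamma (n + β + 1) /
          (n.factorial * Gamma (m + n + α + β + 2)) *
        ((-1) ^ k * n.choose k * (ascPochhammer ℝ m).eval (α + 1 + k)) := by
  have hk : 0 < α + 1 + k := by linarith [(k.cast_nonneg : (0 : ℝ) ≤ k)]
  have hΓk : 0 < Gamma (α + 1 + k) := Gamma_pos_of_pos hk
  have hΓnk : 0 < Gamma (n + β - k + 1) :=
    Gamma_pos_of_pos (by linarith [(Nat.cast_le (α := ℝ)).2 hkn])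
  have hΓ : 0 < Gamma (m + n + α + β + 2) :=
    Gamma_pos_of_pos (by linarith [(m.cast_nonneg : (0 : ℝ) ≤ m), (n.cast_nonneg : (0 : ℝ) ≤ n)])
  rw [Nat.cast_sub hkn, Nat.cast_add,
    show α + (m + k) + (β + (n - k)) + 1 = α + β + m + 1 + n by ring,
    show α + (m + k) + (β + (n - k)) + 2 = m + n + α + β + 2 by ring,
    show β + (n - k) + 1 = (n : ℝ) + β - k + 1 by ring,
    show α + (m + k) + 1 = α + 1 + k + m by ring,
    rpow_add_natCast two_ne_zero, Gamma_add_nat_eq_ascPochhammer_eval_mul hk,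
    Nat.cast_choose ℝ hkn, add_right_comm α k]
  field_simp

theorem integral_one_sub_pow_mul_jacobi_mul_jweight {α β : ℝ} (hα : -1 < α) (hβ : -1 < β)
    (n m : ℕ) :
    ∫ x in (-1 : ℝ)..1, (1 - x) ^ m * jacobi α β n x * jweight α β x =
      (-1) ^ n * m.choose n * 2 ^ (α + β + m + 1) * Gamma (n + α + 1) * Gamma (n + β + 1) *
        (ascPochhammer ℝ (m - n)).eval (n + α + 1) / Gamma (m + n + α + β + 2) := by
  have hp (k : ℕ) : -1 < α + (m + k : ℕ) := by linarith [(m + k).cast_nonneg (α := ℝ)]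
  have hq (k : ℕ) : -1 < β + (n - k : ℕ) := by linarith [(n - k).cast_nonneg (α := ℝ)]
  rw [integral_congr fun x hx => jacobi_mul_jweight_eq_sum hα hβ n m
      ((Set.uIcc_of_le (by norm_num : (-1 : ℝ) ≤ 1)) ▸ hx),
    intervalIntegral.integral_finsetSum fun k _ =>
      (intervalIntegrable_one_sub_rpow_mul_one_add_rpow (hp k) (hq k)).const_mul _]
  simp_rw [intervalIntegral.integral_const_mul,
    integral_one_sub_rpow_mul_one_add_rpow (hp _) (hq _)]
  have hΓ : 0 < Gamma (m + n + α + β + 2) :=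
    Gamma_pos_of_pos (by linarith [(m.cast_nonneg : (0 : ℝ) ≤ m), (n.cast_nonneg : (0 : ℝ) ≤ n)])
  rw [sum_congr rfl fun k hk => jacobi_coeff_mul_beta_eq hα hβ (mem_range_succ_iff.1 hk) m,
    ← mul_sum, sum_neg_one_pow_mul_choose_mul_ascPochhammer_eval,
    Nat.descFactorial_eq_factorial_mul_choose, show α + 1 + n = n + α + 1 by ring]
  push_cast
  field_simp

theorem intervalIntegrable_pow_mul_jacobi_mul_jweight {α β : ℝ} (hα : -1 < α) (hβ : -1 < β)
    (n m : ℕ) :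
    IntervalIntegrable (fun x => (1 - x) ^ m * jacobi α β n x * jweight α β x) volume (-1) 1 :=
  (intervalIntegrable_one_sub_rpow_mul_one_add_rpow hα hβ).continuousOn_mul
    (by unfold jacobi; fun_prop)

theorem integral_chebU_mul_jacobi_mul_jweight {α β : ℝ} (hα : -1 < α) (hβ : -1 < β)
    (n N : ℕ) :
    ∫ x in (-1 : ℝ)..1, chebU N x * jacobi α β n x * jweight α β x =
      ∑ m ∈ range (N + 1), (-2) ^ m * ((N + m + 1).choose (2 * m + 1) : ℝ) *
        ((-1) ^ n * m.choose n * 2 ^ (α + β + m + 1) * Gamma (n + α + 1) * Gamma (n + β + 1) *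
          (ascPochhammer ℝ (m - n)).eval (n + α + 1) / Gamma (m + n + α + β + 2)) := by
  have hexpand (x : ℝ) : chebU N x * jacobi α β n x * jweight α β x =
      ∑ m ∈ range (N + 1), (-2) ^ m * ((N + m + 1).choose (2 * m + 1) : ℝ) *
        ((1 - x) ^ m * jacobi α β n x * jweight α β x) := by
    rw [chebU_eq_sum, sum_mul, sum_mul]
    exact sum_congr rfl fun m _ => by ring
  simp_rw [hexpand]
  rw [intervalIntegral.integral_finsetSum fun m _ =>
    (intervalIntegrable_pow_mul_jacobi_mul_jweight hα hβ n m).const_mul _]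
  simp_rw [intervalIntegral.integral_const_mul, integral_one_sub_pow_mul_jacobi_mul_jweight hα hβ]

theorem sigmaJ_summand_eq {α β : ℝ} (hα : -1 < α) (hβ : -1 < β) {n i j : ℕ} (hij : i ≤ j) :
    1 / gamJ α β n * ((-2) ^ (n + i) * ((n + j + (n + i) + 1).choose (2 * (n + i) + 1) : ℝ) *
      ((-1) ^ n * (n + i).choose n * 2 ^ (α + β + (n + i : ℕ) + 1) * Gamma (n + α + 1) *
        Gamma (n + β + 1) * (ascPochhammer ℝ (n + i - n)).eval (n + α + 1) /
          Gamma ((n + i : ℕ) + n + α + β + 2))) =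
      √π * (2 * n + α + β + 1) * Gamma (n + α + β + 1) / (2 * Gamma (n + α + 1)) *
        ((-1 : ℝ) ^ i * Gamma (2 * n + j + i + 2) * Gamma ((n : ℝ) + i + α + 1) /
          (i.factorial * (j - i).factorial * Gamma ((n : ℝ) + i + 3/2) *
            Gamma (2 * n + i + α + β + 2))) := by
  have hnα : 0 < n + α + 1 := by linarith [(n.cast_nonneg : (0 : ℝ) ≤ n)]
  have hΓnβ : 0 < Gamma (n + β + 1) :=
    Gamma_pos_of_pos (by linarith [(n.cast_nonneg : (0 : ℝ) ≤ n)])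
  have hΓ : 0 < Gamma (2 * n + i + α + β + 2) := Gamma_pos_of_pos (by
    linarith [(n.cast_nonneg : (0 : ℝ) ≤ n), (i.cast_nonneg : (0 : ℝ) ≤ i)])
  rw [gamJ, one_div, inv_div, Nat.add_sub_cancel_left,
    Nat.cast_choose ℝ (show 2 * (n + i) + 1 ≤ n + j + (n + i) + 1 by omega),
    show n + j + (n + i) + 1 - (2 * (n + i) + 1) = j - i by omega,
    show n + j + (n + i) + 1 = 2 * n + j + i + 1 by ring,
    Nat.cast_choose ℝ (show n ≤ n + i by omega), Nat.add_sub_cancel_left,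
    show (2 : ℝ) * n + j + i + 2 = (2 * n + j + i + 1 : ℕ) + 1 by push_cast; ring,
    Gamma_nat_eq_factorial, show (n : ℝ) + i + 3 / 2 = (n + i : ℕ) + 3 / 2 by push_cast; ring,
    Gamma_nat_add_three_halves, show (n : ℝ) + i + α + 1 = n + α + 1 + i by ring,
    Gamma_add_nat_eq_ascPochhammer_eval_mul hnα,
    show α + β + (n + i : ℕ) + 1 = α + β + 1 + (n + i : ℕ) by ring, rpow_add_natCast two_ne_zero,
    show ((n + i : ℕ) : ℝ) + n + α + β + 2 = 2 * n + i + α + β + 2 by push_cast; ring,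
    neg_pow, pow_add (-1 : ℝ) n i]
  have hsq : (-1 : ℝ) ^ n * (-1) ^ n = 1 := by rw [← mul_pow]; norm_num
  field_simp
  linear_combination (2 * n + α + β + 1) * Gamma (n + α + β + 1) *
    (ascPochhammer ℝ i).eval (n + α + 1) * 2 ^ (2 * (n + i) + 1) * hsq

theorem stmt6_general (α β : ℝ) (hα : -1 < α) (hβ : -1 < β)
    (n : ℕ) (j : ℕ) :
    sigmaJ α β n j =
      Real.sqrt Real.pi * (2 * n + α + β + 1) * Real.Gamma (n + α + β + 1) /
          (2 * Real.Gamma (n + α + 1)) *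
        ∑ m ∈ Finset.range (j + 1),
          (-1 : ℝ) ^ m * Real.Gamma (2 * n + j + m + 2) * Real.Gamma ((n : ℝ) + m + α + 1) /
            (m.factorial * (j - m).factorial * Real.Gamma ((n : ℝ) + m + 3/2) *
              Real.Gamma (2 * n + m + α + β + 2)) := by
  rw [sigmaJ, integral_chebU_mul_jacobi_mul_jweight hα hβ, show n + j + 1 = n + (j + 1) by ring,
    sum_range_add, sum_eq_zero fun m hm => by rw [Nat.choose_eq_zero_of_lt (mem_range.1 hm)]; simp,
    zero_add, mul_sum, mul_sum]
  exact sum_congr rfl fun i hi => sigmaJ_summand_eq hα hβ (mem_range_succ_iff.1 hi)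

/-- explicit formula for `σ_{n,j}^{α,β}` in the general Jacobi case. -/
theorem stmt6 (α β : ℝ) (hα : -1 < α) (hβ : -1 < β)
    (n : ℕ) (hn : (n : ℝ) + α + β + 1 > 0) (j : ℕ) :
    sigmaJ α β n j =
      Real.sqrt Real.pi * (2 * n + α + β + 1) * Real.Gamma (n + α + β + 1) /
          (2 * Real.Gamma (n + α + 1)) *
        ∑ m ∈ Finset.range (j + 1),
          (-1 : ℝ) ^ m * Real.Gamma (2 * n + j + m + 2) * Real.Gamma ((n : ℝ) + m + α + 1) /
            (m.factorial * (j - m).factorial * Real.Gamma ((n : ℝ) + m + 3/2) *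
              Real.Gamma (2 * n + m + α + β + 2)) :=
  stmt6_general α β hα hβ n j
end

section
/- Let ρ > 1 and u ∈ A_ρ. Define the Chebyshev expansion coefficients û_n^C = (2/π) ∫_{−1}^1 u(x) T_n(x) (1−x²)^{−1/2} dx for n ≥ 1 and û_0^C = (1/π) ∫_{−1}^1 u(x) (1−x²)^{−1/2} dx. Then |û_n^C| ≤ 2M/ρⁿ for every integer n ≥ 0. -/
/-!
Substituting `x = cos θ` turns the Chebyshev coefficient into `(2/π) ∫₀^π u(cos θ) cos(nθ) dθ`,
and by the symmetry `θ ↦ 2π - θ` this integral is half of `∫₀^{2π} u(cos θ) e^{-inθ} dθ`. With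
`w = e^{iθ}` we have `cos θ = (w + w⁻¹)/2`, so the latter is a contour integral of
`u((w + w⁻¹)/2) / w^(n+1)` over the unit circle. The Joukowski map `w ↦ (w + w⁻¹)/2` sends the
annulus `1 ≤ |w| ≤ ρ` into the Bernstein region, so the integrand is holomorphic there and the
contour may be moved to `|w| = ρ`, where the integrand is at most `M / ρ^(n+1)`.
-/

open Real MeasureTheory Set intervalIntegral Metric
open Complex (I)

lemma one_sub_cos_sq_rpow_neg_half {θ : ℝ} (hθ : θ ∈ Ioo 0 π) :
    (1 - cos θ ^ 2) ^ (-(1/2) : ℝ) = (sin θ)⁻¹ := by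
  have hsin : 0 < sin θ := sin_pos_of_pos_of_lt_pi hθ.1 hθ.2
  rw [← sin_sq, rpow_neg (sq_nonneg _), ← sqrt_eq_rpow, sqrt_sq hsin.le]

/- No integrability hypothesis is needed: the change of variables formula for Bochner integrals
also holds when both sides are the junk value `0`. -/
theorem integral_mul_one_sub_sq_rpow_neg_half (f : ℝ → ℂ) :
    ∫ x in (-1 : ℝ)..1, f x * (((1 - x ^ 2) ^ (-(1/2) : ℝ) : ℝ) : ℂ) =
      ∫ θ in (0 : ℝ)..π, f (cos θ) := by
  rw [integral_of_le (by norm_num), integral_of_le pi_pos.le, ← integral_Icc_eq_integral_Ioc,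
    ← bijOn_cos.image_eq, integral_image_eq_integral_abs_deriv_smul measurableSet_Icc
      (fun θ _ => (hasDerivAt_cos θ).hasDerivWithinAt) injOn_cos,
    integral_Icc_eq_integral_Ioo, integral_Ioc_eq_integral_Ioo]
  refine setIntegral_congr_fun measurableSet_Ioo fun θ hθ => ?_
  have hsin : 0 < sin θ := sin_pos_of_pos_of_lt_pi hθ.1 hθ.2
  rw [one_sub_cos_sq_rpow_neg_half hθ, abs_neg, abs_of_pos hsin, Complex.real_smul,
    Complex.ofReal_inv, mul_left_comm, mul_inv_cancel₀ (Complex.ofReal_ne_zero.2 hsin.ne'),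
    mul_one]

lemma chebT_cos (n : ℕ) (θ : ℝ) : chebT n (cos θ) = cos (n * θ) := by
  simp [chebT, Polynomial.Chebyshev.T_real_cos]

lemma bcurve_eq_circleMap (ρ θ : ℝ) :
    bcurve ρ θ = (circleMap 0 ρ θ + (circleMap 0 ρ θ)⁻¹) / 2 := by
  rw [bcurve, circleMap, zero_add, mul_inv, ← Complex.exp_neg, neg_mul]

lemma bcurve_one (θ : ℝ) : bcurve 1 θ = cos θ := by
  simp [bcurve, Complex.ofReal_cos, Complex.cos]

lemma circleMap_one_mem_bernsteinSet {ρ : ℝ} (hρ : 1 ≤ ρ) (θ : ℝ) :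
    (circleMap 0 1 θ + (circleMap 0 1 θ)⁻¹) / 2 ∈ bernsteinSet ρ :=
  ⟨_, by simp, by simpa using hρ, rfl⟩

lemma ofReal_mem_bernsteinSet {ρ x : ℝ} (hρ : 1 ≤ ρ) (hx : x ∈ Icc (-1) 1) :
    (x : ℂ) ∈ bernsteinSet ρ := by
  rw [← cos_arccos hx.1 hx.2, ← bcurve_one, bcurve_eq_circleMap]
  exact circleMap_one_mem_bernsteinSet hρ _

lemma InA.continuous_comp_cos {ρ : ℝ} {u : ℂ → ℂ} (hu : InA ρ u) (hρ : 1 ≤ ρ) :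
    Continuous fun θ : ℝ => u (cos θ) := by
  obtain ⟨s, hs, hsub, hd⟩ := hu
  refine continuous_iff_continuousAt.2 fun θ => ?_
  have hθ : (cos θ : ℂ) ∈ s := hsub (ofReal_mem_bernsteinSet hρ ⟨neg_one_le_cos θ, cos_le_one θ⟩)
  exact (hd.continuousOn.continuousAt (hs.mem_nhds hθ)).comp
    (f := fun θ : ℝ => (cos θ : ℂ)) (by fun_prop)

lemma circleIntegral_joukowski_one (u : ℂ → ℂ) (n : ℕ) :
    (∮ z in C(0, 1), u ((z + z⁻¹) / 2) / z ^ (n + 1)) =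
      I * ∫ θ in (0 : ℝ)..2 * π, u (cos θ) * Complex.exp (-(n * θ) * I) := by
  rw [circleIntegral, ← intervalIntegral.integral_const_mul]
  refine integral_congr fun θ _ => ?_
  have hexp : Complex.exp (-(n * θ) * I) = (Complex.exp (θ * I) ^ n)⁻¹ := by
    rw [← Complex.exp_nat_mul, ← Complex.exp_neg]
    ring_nf
  rw [deriv_circleMap, ← bcurve_eq_circleMap, bcurve_one, hexp, smul_eq_mul]
  simp only [circleMap, zero_add, Complex.ofReal_one, one_mul]
  field_simp
  ring

lemma InA.circleIntegral_joukowski_eq {ρ : ℝ} {u : ℂ → ℂ} (hu : InA ρ u) (hρ : 1 ≤ ρ) (n : ℕ) :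
    (∮ z in C(0, ρ), u ((z + z⁻¹) / 2) / z ^ (n + 1)) =
      ∮ z in C(0, 1), u ((z + z⁻¹) / 2) / z ^ (n + 1) := by
  obtain ⟨s, hs, hsub, hd⟩ := hu
  have hdiff : ∀ z : ℂ, 1 ≤ ‖z‖ → ‖z‖ ≤ ρ →
      DifferentiableAt ℂ (fun z => u ((z + z⁻¹) / 2) / z ^ (n + 1)) z := by
    intro z h1 hρz
    have hz : z ≠ 0 := norm_pos_iff.1 (one_pos.trans_le h1)
    have hud : DifferentiableAt ℂ u ((z + z⁻¹) / 2) :=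
      hd.differentiableAt (hs.mem_nhds (hsub ⟨z, h1, hρz, rfl⟩))
    exact (hud.comp z ((differentiableAt_id.add (differentiableAt_inv hz)).div_const 2)).div
      (differentiableAt_pow _) (pow_ne_zero _ hz)
  refine Complex.circleIntegral_eq_of_differentiable_on_annulus_off_countable one_pos hρ
    countable_empty (fun z hz => ?_) fun z hz => ?_
  · simp only [mem_sdiff, mem_closedBall_zero_iff, mem_ball_zero_iff, not_lt] at hz
    exact (hdiff z hz.2 hz.1).continuousAt.continuousWithinAt
  · simp only [mem_sdiff, mem_closedBall_zero_iff, mem_ball_zero_iff, not_le,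
      mem_empty_iff_false, not_false_eq_true, and_true] at hz
    exact hdiff z hz.2.le hz.1.le

lemma norm_circleIntegral_joukowski_le {ρ M : ℝ} {u : ℂ → ℂ} (hρ : 0 < ρ)
    (hM : ∀ θ ∈ Icc 0 (2 * π), ‖u (bcurve ρ θ)‖ ≤ M) (n : ℕ) :
    ‖∮ z in C(0, ρ), u ((z + z⁻¹) / 2) / z ^ (n + 1)‖ ≤ 2 * π * M / ρ ^ n := by
  refine (circleIntegral.norm_integral_le_of_norm_le_const (C := M / ρ ^ (n + 1)) hρ.le
    fun z hz => ?_).trans_eq ?_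
  · rw [← abs_of_pos hρ, ← image_circleMap_Ioc] at hz
    obtain ⟨θ, hθ, rfl⟩ := hz
    rw [norm_div, norm_pow, norm_circleMap_zero, abs_of_pos hρ, ← bcurve_eq_circleMap]
    exact div_le_div_of_nonneg_right (hM θ (Ioc_subset_Icc_self hθ)) (by positivity)
  · rw [pow_succ]
    field_simp

theorem InA.norm_integral_comp_cos_mul_exp_le {ρ M : ℝ} {u : ℂ → ℂ} (hu : InA ρ u)
    (hρ : 1 ≤ ρ) (hM : ∀ θ ∈ Icc 0 (2 * π), ‖u (bcurve ρ θ)‖ ≤ M) (n : ℕ) :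
    ‖∫ θ in (0 : ℝ)..2 * π, u (cos θ) * Complex.exp (-(n * θ) * I)‖ ≤
      2 * π * M / ρ ^ n := by
  have h := norm_circleIntegral_joukowski_le (one_pos.trans_le hρ) hM n
  rwa [hu.circleIntegral_joukowski_eq hρ, circleIntegral_joukowski_one, norm_mul,
    Complex.norm_I, one_mul] at h

lemma integral_mul_exp_eq_two_mul_integral_mul_cos {F : ℝ → ℂ} (hF : Continuous F)
    (hsymm : ∀ θ, F (2 * π - θ) = F θ) (n : ℕ) :
    ∫ θ in (0 : ℝ)..2 * π, F θ * Complex.exp (-(n * θ) * I) =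
      2 * ∫ θ in (0 : ℝ)..π, F θ * cos (n * θ) := by
  set E : ℝ → ℂ := fun θ => F θ * Complex.exp (-(n * θ) * I)
  have hE : Continuous E := by fun_prop
  have hreflect : ∀ θ, E (2 * π - θ) = F θ * Complex.exp (n * θ * I) := fun θ => by
    have harg : -(n * ((2 * π - θ : ℝ) : ℂ)) * I = n * θ * I - n * (2 * π * I) := by
      push_cast; ring
    simp only [E, hsymm, harg, Complex.exp_sub, Complex.exp_nat_mul_two_pi_mul_I, div_one]
  calc ∫ θ in (0 : ℝ)..2 * π, E θ
      = (∫ θ in (0 : ℝ)..π, E θ) + ∫ θ in π..2 * π, E θ :=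
        (integral_add_adjacent_intervals (hE.intervalIntegrable _ _)
          (hE.intervalIntegrable _ _)).symm
    _ = (∫ θ in (0 : ℝ)..π, E θ) + ∫ θ in (0 : ℝ)..π, E (2 * π - θ) := by
        rw [integral_comp_sub_left E (2 * π)]
        norm_num [two_mul]
    _ = ∫ θ in (0 : ℝ)..π, (E θ + E (2 * π - θ)) :=
        (integral_add (hE.intervalIntegrable _ _)
          ((hE.comp (by fun_prop)).intervalIntegrable _ _)).symm
    _ = 2 * ∫ θ in (0 : ℝ)..π, F θ * cos (n * θ) := by
        rw [← intervalIntegral.integral_const_mul]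
        refine integral_congr fun θ _ => ?_
        simp only [hreflect, E, Complex.ofReal_cos, Complex.ofReal_mul, Complex.ofReal_natCast]
        rw [mul_left_comm, Complex.two_cos, neg_mul]
        ring

theorem InA.norm_integral_comp_cos_mul_cos_le {ρ M : ℝ} {u : ℂ → ℂ} (hu : InA ρ u)
    (hρ : 1 ≤ ρ) (hM : ∀ θ ∈ Icc 0 (2 * π), ‖u (bcurve ρ θ)‖ ≤ M) (n : ℕ) :
    ‖∫ θ in (0 : ℝ)..π, u (cos θ) * cos (n * θ)‖ ≤ π * M / ρ ^ n := by
  have h := hu.norm_integral_comp_cos_mul_exp_le hρ hM n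
  rw [integral_mul_exp_eq_two_mul_integral_mul_cos (hu.continuous_comp_cos hρ)
    (fun θ => by rw [cos_two_pi_sub]), norm_mul, Complex.norm_two] at h
  have h2 : 2 * π * M / ρ ^ n = 2 * (π * M / ρ ^ n) := by ring
  linarith

/-- bound for the Chebyshev expansion coefficients of an analytic function. -/
theorem stmt11 (ρ : ℝ) (hρ : 1 < ρ) (u : ℂ → ℂ) (hu : InA ρ u) (M : ℝ)
    (hM : ∀ θ ∈ Set.Icc (0 : ℝ) (2 * Real.pi), ‖u (bcurve ρ θ)‖ ≤ M)
    (n : ℕ) :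
    ‖(if n = 0 then
        ((1 / Real.pi : ℝ) : ℂ) *
          ∫ x in (-1 : ℝ)..1, u x * (((1 - x ^ 2) ^ (-(1/2) : ℝ) : ℝ) : ℂ)
      else
        ((2 / Real.pi : ℝ) : ℂ) *
          ∫ x in (-1 : ℝ)..1, u x * (chebT n x : ℝ) * (((1 - x ^ 2) ^ (-(1/2) : ℝ) : ℝ) : ℂ))‖ ≤
      2 * M / ρ ^ n := by
  have hM0 : 0 ≤ M := (norm_nonneg _).trans (hM 0 ⟨le_rfl, by positivity⟩)
  have key := hu.norm_integral_comp_cos_mul_cos_le hρ.le hM n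
  split_ifs with hn
  · subst hn
    simp only [Nat.cast_zero, zero_mul, cos_zero, Complex.ofReal_one, mul_one, pow_zero,
      div_one] at key ⊢
    rw [integral_mul_one_sub_sq_rpow_neg_half (fun x => u x), norm_mul, Complex.norm_real,
      norm_of_nonneg (by positivity)]
    calc 1 / π * ‖∫ θ in (0 : ℝ)..π, u (cos θ)‖ ≤ 1 / π * (π * M) := by gcongr
      _ ≤ 2 * M := by field_simp; linarith
  · rw [integral_mul_one_sub_sq_rpow_neg_half (fun x => u x * (chebT n x : ℂ)), norm_mul,
      Complex.norm_real, norm_of_nonneg (by positivity)]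
    simp only [chebT_cos]
    calc 2 / π * ‖∫ θ in (0 : ℝ)..π, u (cos θ) * cos (n * θ)‖ ≤ 2 / π * (π * M / ρ ^ n) := by
          gcongr
      _ = 2 * M / ρ ^ n := by field_simp
end
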